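/- arXiv:2409.15126 — 4 statements merged into one kernel-verified Lean document; each statement's English description precedes it below -/
import Mathlib

section
/- Let μ_c and μ_p be probability mass functions on Z = X × Y, let α ∈ (0,1) and 0 < β < 1 − α, and define ν_p^unl := α μ_c + β μ_p^unl + (1 − α − β) μ_p. Suppose (x, y) ∈ Z satisfies μ_c(x, y) = 0 (so that μ_c(y | x) = 0) and α μ_c(x) + (1 − α) μ_p(x) > 0. Then ν_p^unl(y | x) = [(β/C) μ_p(x) + (1 − α − β) μ_p(x) μ_p(y | x)] / [α μ_c(x) + (1 − α) μ_p(x)]. -/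
open scoped BigOperators

/-- The x-marginal of a distribution on `X × Y`. -/
def marginal {X Y : Type*} [Fintype Y] (p : X × Y → ℝ) (x : X) : ℝ :=
  ∑ y, p (x, y)

/-- The conditional posterior `p(y | x)` (division by zero yields 0). -/
noncomputable def posterior {X Y : Type*} [Fintype Y] (p : X × Y → ℝ) (x : X) (y : Y) : ℝ :=
  p (x, y) / marginal p x

/-- The approximately-unlearned distribution: same x-marginal, uniform posterior `1/C`. -/
noncomputable def unl {X Y : Type*} [Fintype Y] (p : X × Y → ℝ) : X × Y → ℝ :=
  fun z => marginal p z.1 / (Fintype.card Y : ℝ)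

/-- Posterior of `ν_p^unl` when the clean distribution puts no mass on `(x, y)`. -/
theorem unlearn_poison_posterior_unambiguous {X Y : Type*} [Fintype Y] [Nonempty Y]
    (μc μp : X × Y → ℝ) (α β : ℝ)
    (hc0 : ∀ z, 0 ≤ μc z) (hc1 : HasSum μc 1)
    (hp0 : ∀ z, 0 ≤ μp z) (hp1 : HasSum μp 1)
    (hα0 : 0 < α) (hα1 : α < 1) (hβ0 : 0 < β) (hβ1 : β < 1 - α)
    (x : X) (y : Y)
    (hcz : μc (x, y) = 0)
    (hx : 0 < α * marginal μc x + (1 - α) * marginal μp x) :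
    posterior (fun z => α * μc z + β * unl μp z + (1 - α - β) * μp z) x y =
      ((β / (Fintype.card Y : ℝ)) * marginal μp x
        + (1 - α - β) * marginal μp x * posterior μp x y) /
      (α * marginal μc x + (1 - α) * marginal μp x) := by
  have hC : (0:ℝ) < (Fintype.card Y : ℝ) := by
    exact_mod_cast Fintype.card_pos
  have hmarg : marginal (fun z => α * μc z + β * unl μp z + (1 - α - β) * μp z) x
      = α * marginal μc x + (1 - α) * marginal μp x := by
    simp only [marginal, unl, Finset.sum_add_distrib, ← Finset.mul_sum,
      Finset.sum_const, Finset.card_univ, nsmul_eq_mul]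
    field_simp
    ring
  have hnum : (1 - α - β) * marginal μp x * posterior μp x y
      = (1 - α - β) * μp (x, y) := by
    unfold posterior
    by_cases h : marginal μp x = 0
    · have hz : μp (x, y) = 0 :=
        Finset.sum_eq_zero_iff_of_nonneg (fun i _ => hp0 (x, i)) |>.mp h y (Finset.mem_univ y)
      simp [h, hz]
    · field_simp
  rw [hnum]
  unfold posterior
  rw [hmarg]
  congr 1
  simp only [hcz, unl]
  ring
end

section
/- Let μ_c and μ_p be probability mass functions on Z = X × Y, let α ∈ (0,1) and 0 < β < 1 − α, and define ν_p^unl := α μ_c + β μ_p^unl + (1 − α − β) μ_p. Suppose (x, y) ∈ Z satisfies μ_c(x) = 0 (the trigger input x does not appear in clean data) and μ_p(x) > 0. Then ν_p^unl(y | x) = μ_p(y | x) + (β / (1 − α)) · (1/C − μ_p(y | x)). -/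
open scoped BigOperators

/-- Posterior of `ν_p^unl` when the trigger input `x` does not appear in clean data. -/
theorem unlearn_poison_posterior_trigger {X Y : Type*} [Fintype Y] [Nonempty Y]
    (μc μp : X × Y → ℝ) (α β : ℝ)
    (hc0 : ∀ z, 0 ≤ μc z) (hc1 : HasSum μc 1)
    (hp0 : ∀ z, 0 ≤ μp z) (hp1 : HasSum μp 1)
    (hα0 : 0 < α) (hα1 : α < 1) (hβ0 : 0 < β) (hβ1 : β < 1 - α)
    (x : X) (y : Y)
    (hcx : marginal μc x = 0) (hpx : 0 < marginal μp x) :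
    posterior (fun z => α * μc z + β * unl μp z + (1 - α - β) * μp z) x y =
      posterior μp x y
        + (β / (1 - α)) * (1 / (Fintype.card Y : ℝ) - posterior μp x y) := by

  have hC : (0:ℝ) < (Fintype.card Y : ℝ) := by
    exact_mod_cast Fintype.card_pos
  have hμcxy : μc (x, y) = 0 := by
    have := (Finset.sum_eq_zero_iff_of_nonneg (fun i _ => hc0 (x, i))).mp hcx
    exact this y (Finset.mem_univ y)
  have hm : marginal (fun z => α * μc z + β * unl μp z + (1 - α - β) * μp z) x
      = (1 - α) * marginal μp x := by
    simp only [marginal, unl, Finset.sum_add_distrib, ← Finset.mul_sum]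
    rw [show (∑ i, μc (x, i)) = 0 from hcx]
    rw [Finset.sum_const, Finset.card_univ, nsmul_eq_mul]
    field_simp
    ring
  have h1α : (1 : ℝ) - α ≠ 0 := by linarith
  have hmx : marginal μp x ≠ 0 := ne_of_gt hpx
  unfold posterior
  rw [hm]
  have hunl : unl μp (x, y) = marginal μp x / (Fintype.card Y : ℝ) := rfl
  show (α * μc (x,y) + β * unl μp (x,y) + (1 - α - β) * μp (x,y)) / ((1 - α) * marginal μp x) = _
  rw [hunl, hμcxy]
  field_simp
  ring
end

section
/- Let μ_c and μ_p be probability measures on a measurable space Z, let Θ be a nonempty set of parameters, and let ℓ : Θ → Z → ℝ be a nonnegative loss function such that for every θ ∈ Θ the function ℓ(θ, ·) is integrable with respect to both μ_c and μ_p. Define L(θ; μ) := ∫ ℓ(θ, z) dμ(z), let Θ_c and Θ_p be the sets of minimizers over Θ of L(·; μ_c) and L(·; μ_p), and suppose Θ_c ∩ Θ_p ≠ ∅. Then for every α ∈ (0,1), any θ ∈ Θ that minimizes L(·; α μ_c + (1 − α) μ_p) over Θ satisfies θ ∈ Θ_c and θ ∈ Θ_p. -/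
open MeasureTheory

/-- Expected loss `L(θ; μ) = ∫ ℓ(θ, z) dμ(z)`. -/
noncomputable def expLoss {Θ Z : Type*} [MeasurableSpace Z]
    (ℓ : Θ → Z → ℝ) (μ : Measure Z) (θ : Θ) : ℝ :=
  ∫ z, ℓ θ z ∂μ

/-- The set of minimizers of `F` over `Θ`. -/
def minimizers {Θ : Type*} (F : Θ → ℝ) : Set Θ :=
  {θ | ∀ θ', F θ ≤ F θ'}

/-- If `Θ_c ∩ Θ_p ≠ ∅`, then any minimizer of the mixture loss simultaneously minimizes
the losses on `μ_c` and `μ_p`. -/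
theorem mixture_minimizer_mem {Θ Z : Type*} [Nonempty Θ] [MeasurableSpace Z]
    (μc μp : Measure Z) [IsProbabilityMeasure μc] [IsProbabilityMeasure μp]
    (ℓ : Θ → Z → ℝ) (hℓ : ∀ θ z, 0 ≤ ℓ θ z)
    (hic : ∀ θ, Integrable (ℓ θ) μc) (hip : ∀ θ, Integrable (ℓ θ) μp)
    (hne : (minimizers (expLoss ℓ μc) ∩ minimizers (expLoss ℓ μp)).Nonempty)
    (α : ℝ) (h0 : 0 < α) (h1 : α < 1) (θ : Θ)
    (hθ : θ ∈ minimizers (expLoss ℓ (ENNReal.ofReal α • μc + ENNReal.ofReal (1 - α) • μp))) :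
    θ ∈ minimizers (expLoss ℓ μc) ∧ θ ∈ minimizers (expLoss ℓ μp) := by
  obtain ⟨θs, hc, hp⟩ := hne
  have h1' : (0:ℝ) ≤ 1 - α := by linarith
  have hmix : ∀ θ', expLoss ℓ (ENNReal.ofReal α • μc + ENNReal.ofReal (1 - α) • μp) θ'
      = α * expLoss ℓ μc θ' + (1 - α) * expLoss ℓ μp θ' := by
    intro θ'
    unfold expLoss
    rw [integral_add_measure ((hic θ').smul_measure ENNReal.ofReal_ne_top)
        ((hip θ').smul_measure ENNReal.ofReal_ne_top),
      integral_smul_measure, integral_smul_measure,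
      ENNReal.toReal_ofReal h0.le, ENNReal.toReal_ofReal h1']
    simp [smul_eq_mul]
  -- θs minimizes both, θ minimizes mixture
  have hmle := hθ θs
  rw [hmix θ, hmix θs] at hmle
  have hcle : expLoss ℓ μc θs ≤ expLoss ℓ μc θ := hc θ
  have hple : expLoss ℓ μp θs ≤ expLoss ℓ μp θ := hp θ
  have hceq : expLoss ℓ μc θ = expLoss ℓ μc θs := by nlinarith
  have hpeq : expLoss ℓ μp θ = expLoss ℓ μp θs := by nlinarith
  exact ⟨fun θ' => hceq ▸ hc θ', fun θ' => hpeq ▸ hp θ'⟩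
end

section
/- Let μ_c and μ_p be probability measures on a measurable space Z, let Θ be a nonempty set of parameters, and let ℓ : Θ → Z → ℝ be a nonnegative loss function such that for every θ ∈ Θ the function ℓ(θ, ·) is integrable with respect to both μ_c and μ_p. Define L(θ; μ) := ∫ ℓ(θ, z) dμ(z), let Θ_c and Θ_p be the sets of minimizers over Θ of L(·; μ_c) and L(·; μ_p), and suppose Θ_c ∩ Θ_p ≠ ∅. Then for any two mixing weights α, α' ∈ (0,1), the set of minimizers over Θ of L(·; α μ_c + (1 − α) μ_p) equals the set of minimizers over Θ of L(·; α' μ_c + (1 − α') μ_p); that is, removing any fraction of duplicated poisoned data and retraining from scratch does not change the set of loss-minimizing classifiers. -/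
open MeasureTheory

lemma expLoss_mix {Θ Z : Type*} [MeasurableSpace Z]
    (μc μp : Measure Z) (ℓ : Θ → Z → ℝ)
    (hic : ∀ θ, Integrable (ℓ θ) μc) (hip : ∀ θ, Integrable (ℓ θ) μp)
    (α : ℝ) (h0 : 0 < α) (h1 : α < 1) (θ : Θ) :
    expLoss ℓ (ENNReal.ofReal α • μc + ENNReal.ofReal (1 - α) • μp) θ
      = α * expLoss ℓ μc θ + (1 - α) * expLoss ℓ μp θ := by
  have h1' : (0:ℝ) ≤ 1 - α := by linarith
  unfold expLoss
  rw [integral_add_measure ((hic θ).smul_measure (by simp))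
    ((hip θ).smul_measure (by simp)), integral_smul_measure, integral_smul_measure,
    ENNReal.toReal_ofReal h0.le, ENNReal.toReal_ofReal h1']
  simp [smul_eq_mul]

lemma mix_minimizers {Θ Z : Type*} [MeasurableSpace Z]
    (μc μp : Measure Z) (ℓ : Θ → Z → ℝ)
    (hic : ∀ θ, Integrable (ℓ θ) μc) (hip : ∀ θ, Integrable (ℓ θ) μp)
    (hne : (minimizers (expLoss ℓ μc) ∩ minimizers (expLoss ℓ μp)).Nonempty)
    (α : ℝ) (h0 : 0 < α) (h1 : α < 1) :
    minimizers (expLoss ℓ (ENNReal.ofReal α • μc + ENNReal.ofReal (1 - α) • μp))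
      = minimizers (expLoss ℓ μc) ∩ minimizers (expLoss ℓ μp) := by
  obtain ⟨θ₀, hc0, hp0⟩ := hne
  have hb : (0:ℝ) < 1 - α := by linarith
  ext θ
  constructor
  · intro hθ
    have key := hθ θ₀
    rw [expLoss_mix μc μp ℓ hic hip α h0 h1, expLoss_mix μc μp ℓ hic hip α h0 h1] at key
    have hc : expLoss ℓ μc θ₀ ≤ expLoss ℓ μc θ := hc0 θ
    have hp : expLoss ℓ μp θ₀ ≤ expLoss ℓ μp θ := hp0 θ
    have hceq : expLoss ℓ μc θ = expLoss ℓ μc θ₀ := by nlinarith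
    have hpeq : expLoss ℓ μp θ = expLoss ℓ μp θ₀ := by nlinarith
    exact ⟨fun θ' => hceq ▸ hc0 θ', fun θ' => hpeq ▸ hp0 θ'⟩
  · rintro ⟨hc, hp⟩ θ'
    rw [expLoss_mix μc μp ℓ hic hip α h0 h1, expLoss_mix μc μp ℓ hic hip α h0 h1]
    have := hc θ'
    have := hp θ'
    nlinarith

/-- If `Θ_c ∩ Θ_p ≠ ∅`, then the set of loss minimizers for the mixture
`α μ_c + (1 − α) μ_p` is the same for every mixing weight `α ∈ (0,1)`:
removing duplicated poisoned data and retraining from scratch does not change the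
set of loss-minimizing classifiers. -/
theorem mixture_minimizers_independent_of_weight {Θ Z : Type*} [Nonempty Θ] [MeasurableSpace Z]
    (μc μp : Measure Z) [IsProbabilityMeasure μc] [IsProbabilityMeasure μp]
    (ℓ : Θ → Z → ℝ) (hℓ : ∀ θ z, 0 ≤ ℓ θ z)
    (hic : ∀ θ, Integrable (ℓ θ) μc) (hip : ∀ θ, Integrable (ℓ θ) μp)
    (hne : (minimizers (expLoss ℓ μc) ∩ minimizers (expLoss ℓ μp)).Nonempty)
    (α α' : ℝ) (h0 : 0 < α) (h1 : α < 1) (h0' : 0 < α') (h1' : α' < 1) :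
    minimizers (expLoss ℓ (ENNReal.ofReal α • μc + ENNReal.ofReal (1 - α) • μp)) =
      minimizers (expLoss ℓ (ENNReal.ofReal α' • μc + ENNReal.ofReal (1 - α') • μp)) := by
  rw [mix_minimizers μc μp ℓ hic hip hne α h0 h1,
    mix_minimizers μc μp ℓ hic hip hne α' h0' h1']
end
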